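/- arXiv:2309.07660 — 3 statements merged into one kernel-verified Lean document; each statement's English description precedes it below -/
import Mathlib

section
/- Fix m ∈ ℕ and 1<r<2, and let s, ε, δ satisfy 1<s<r, 0<ε<r−s, and 0<δ<m(r−ε). Set θ=(r−ε)'=(r−ε)/(r−ε−1) and ν=θ(m−δ/(r−ε)). Define ξ̃(λ)=λ^{r−ε}(1+log⁺λ)^δ and ζ(λ)=λ^θ(1+log⁺λ)^ν. Then ξ̃^{−1}(λ)·ζ^{−1}(λ)·(log λ)^m ≈ λ for every λ ≥ e; that is, there exist constants 0<c₁≤c₂ with c₁λ ≤ ξ̃^{−1}(λ)ζ^{−1}(λ)(log λ)^m ≤ c₂λ for all λ ≥ e. -/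
open MeasureTheory Real Set Filter

noncomputable section

/-- `ℝⁿ` as a Euclidean space. -/
abbrev X (n : ℕ) := EuclideanSpace ℝ (Fin n)

/-- An axis-parallel cube in `ℝⁿ`, given by its center and (positive) half side length. -/
structure Cube (n : ℕ) where
  center : X n
  half : ℝ
  half_pos : 0 < half

namespace Cube

/-- The set of points of a cube. -/
def carrier {n : ℕ} (Q : Cube n) : Set (X n) :=
  {x | ∀ i, |x i - Q.center i| ≤ Q.half}

/-- The concentric dilate `2Q` of a cube. -/
def double {n : ℕ} (Q : Cube n) : Cube n :=
  ⟨Q.center, 2 * Q.half, by linarith [Q.half_pos]⟩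

end Cube

/-- Average of `f` over the cube `Q` (w.r.t. Lebesgue measure). -/
def avg {n : ℕ} (Q : Cube n) (f : X n → ℝ) : ℝ :=
  ⨍ x in Q.carrier, f x

/-- The BMO "norm" of `b`: the supremum over all cubes of the mean oscillation. -/
def bmoNorm {n : ℕ} (b : X n → ℝ) : ℝ :=
  ⨆ Q : Cube n, avg Q (fun x => |b x - avg Q b|)

/-- `b` belongs to BMO: its mean oscillations over cubes are uniformly bounded. -/
def MemBMO {n : ℕ} (b : X n → ℝ) : Prop :=
  ∃ B : ℝ, ∀ Q : Cube n, avg Q (fun x => |b x - avg Q b|) ≤ B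

/-- The Muckenhoupt `A_q` condition (for `1 < q`), with `q' = q/(q-1)`. -/
def MemAq {n : ℕ} (q : ℝ) (v : X n → ℝ) : Prop :=
  ∃ C : ℝ, ∀ Q : Cube n,
    avg Q v * (avg Q fun x => v x ^ (1 - q / (q - 1))) ^ (q - 1) ≤ C

/-- The reverse Hölder `RH_∞` condition with constant `C`. -/
def RHinfWith {n : ℕ} (C : ℝ) (v : X n → ℝ) : Prop :=
  ∀ Q : Cube n, essSup v (volume.restrict Q.carrier) ≤ C * avg Q v

/-- The reverse Hölder class `RH_∞`. -/
def MemRHinf {n : ℕ} (v : X n → ℝ) : Prop :=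
  ∃ C, 0 < C ∧ RHinfWith C v

/-- Weighted Luxemburg average of `f` over the cube `Q`, associated to the Young
function `φ` and the weight `w`. -/
def luxNorm {n : ℕ} (φ : ℝ → ℝ) (Q : Cube n) (w f : X n → ℝ) : ℝ :=
  sInf {l : ℝ | 0 < l ∧
    (∫ x in Q.carrier, φ (|f x| / l) * w x) ≤ ∫ x in Q.carrier, w x}

/-- (Unweighted) Luxemburg average of `f` over a set `s`. -/
def luxOn {n : ℕ} (φ : ℝ → ℝ) (s : Set (X n)) (f : X n → ℝ) : ℝ :=
  sInf {l : ℝ | 0 < l ∧ (∫ x in s, φ (|f x| / l)) ≤ (volume s).toReal}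

/-- The generalized weighted maximal operator `M_{φ,w}`. -/
def maxOp {n : ℕ} (φ : ℝ → ℝ) (w f : X n → ℝ) (x : X n) : ℝ :=
  ⨆ Q : {Q : Cube n // x ∈ Q.carrier}, luxNorm φ Q.1 w f

/-- The Hardy–Littlewood maximal operator over cubes. -/
def hlMax {n : ℕ} (f : X n → ℝ) (x : X n) : ℝ :=
  ⨆ Q : {Q : Cube n // x ∈ Q.carrier}, avg Q.1 (fun y => |f y|)

/-- A Young function: strictly increasing and convex on `[0,∞)`, vanishing at `0`
and tending to `∞`. -/
structure IsYoung (φ : ℝ → ℝ) : Prop where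
  strictMonoOn : StrictMonoOn φ (Ici 0)
  convexOn : ConvexOn ℝ (Ici 0) φ
  zero : φ 0 = 0
  tendsto_atTop : Tendsto φ atTop atTop

/-- The complementary (conjugate) Young function `φ̃(t) = sup {ts - φ(s) : s ≥ 0}`. -/
def conjYoung (φ : ℝ → ℝ) (t : ℝ) : ℝ :=
  sSup {u : ℝ | ∃ s, 0 ≤ s ∧ u = t * s - φ s}

/-- Generalized inverse on `[0, ∞)` of an increasing function. -/
def yinv (φ : ℝ → ℝ) (t : ℝ) : ℝ :=
  sInf {s : ℝ | 0 ≤ s ∧ t ≤ φ s}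

/-- `φ` has upper type `r`. -/
def HasUpperType (φ : ℝ → ℝ) (r : ℝ) : Prop :=
  ∃ C, 0 < C ∧ ∀ s : ℝ, 1 ≤ s → ∀ t : ℝ, 0 ≤ t → φ (s * t) ≤ C * s ^ r * φ t

/-- `φ` has lower type `r`. -/
def HasLowerType (φ : ℝ → ℝ) (r : ℝ) : Prop :=
  ∃ C, 0 < C ∧ ∀ s : ℝ, 0 ≤ s → s ≤ 1 → ∀ t : ℝ, 0 ≤ t → φ (s * t) ≤ C * s ^ r * φ t

/-- The `B_p` class: `∫_c^∞ φ(t) t^{-p} dt/t < ∞` for some `c > 0`. -/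
def MemBp (φ : ℝ → ℝ) (p : ℝ) : Prop :=
  ∃ c, 0 < c ∧ IntegrableOn (fun t : ℝ => φ t / t ^ (p + 1)) (Ioi c) volume

/-- `Φ_a(λ) = λ (1 + log⁺ λ)^a`. -/
def PhiLog (a : ℝ) (l : ℝ) : ℝ :=
  l * (1 + max 0 (Real.log l)) ^ a

/-- `Ψ(λ) = λ^{p'+1-q'}` for `0 ≤ λ < 1` and `Ψ(λ) = λ^{p'}` for `λ ≥ 1`. -/
def PsiFun (p' q' : ℝ) (l : ℝ) : ℝ :=
  if l < 1 then l ^ (p' + 1 - q') else l ^ p'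

/-- The higher order commutators: `T_b^0 = T`,
`T_b^{m+1} f = b ⬝ T_b^m f - T_b^m (b f)`. -/
def commN {n : ℕ} (b : X n → ℝ) (T : (X n → ℝ) → (X n → ℝ)) :
    ℕ → (X n → ℝ) → (X n → ℝ)
  | 0, f => T f
  | m + 1, f => fun x => b x * commN b T m f x - commN b T m (fun y => b y * f y) x

/-- The `L^φ`-Hörmander condition of order `m` on a kernel `K`
(`K ∈ H_φ` for `m = 0`, and `K ∈ H_{φ,m}` in general):
`∑_{k≥1} (2^k R)^n k^m ‖(K(·-y)-K(·)) χ_{2^k R < |x| ≤ 2^{k+1} R}‖_{φ, B(0, 2^{k+1}R)} ≤ C`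
for all `y` and all `R > c|y|`. -/
def Hormander {n : ℕ} (φ : ℝ → ℝ) (m : ℕ) (K : X n → ℝ) : Prop :=
  ∃ c : ℝ, 1 ≤ c ∧ ∃ C, 0 < C ∧ ∀ (y : X n) (R : ℝ), c * ‖y‖ < R → ∀ N : ℕ,
    ∑ k ∈ Finset.range N,
      (2 ^ (k + 1) * R) ^ n * ((k + 1 : ℕ) : ℝ) ^ m *
        luxOn φ (Metric.ball (0 : X n) (2 * (2 ^ (k + 1) * R)))
          ({z : X n | 2 ^ (k + 1) * R < ‖z‖ ∧ ‖z‖ ≤ 2 * (2 ^ (k + 1) * R)}.indicator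
            (fun z => K (z - y) - K z)) ≤ C

/-- Size and smoothness (Calderón–Zygmund) conditions on a kernel `K`. -/
def CZKernel (n : ℕ) (K : X n → ℝ) : Prop :=
  (∃ C, 0 < C ∧ ∀ x : X n, x ≠ 0 → |K x| ≤ C / ‖x‖ ^ n) ∧
  (∃ C, 0 < C ∧ ∀ x y z : X n, 2 * ‖y - z‖ < ‖x - y‖ →
    |K (x - y) - K (x - z)| ≤ C * ‖x - z‖ / ‖x - y‖ ^ (n + 1))

/-- `T` is a linear operator, bounded on `L²`, represented off the support of `f`
by integration against the kernel `K(x - y)`. -/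
def CZRepresented (n : ℕ) (T : (X n → ℝ) → (X n → ℝ)) (K : X n → ℝ) : Prop :=
  IsLinearMap ℝ T ∧
  (∃ C, 0 < C ∧ ∀ f : X n → ℝ, MemLp f 2 volume →
    eLpNorm (T f) 2 volume ≤ ENNReal.ofReal C * eLpNorm f 2 volume) ∧
  (∀ f : X n → ℝ, MemLp f 2 volume → HasCompactSupport f →
    ∀ x ∉ tsupport f, T f x = ∫ y, K (x - y) * f y)

end

lemma rpow_rpow' (x p q : ℝ) (hx : 0 ≤ x) : (x ^ p) ^ q = x ^ (p * q) :=
  (Real.rpow_mul hx p q).symm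

lemma yinv_bound (φ : ℝ → ℝ) (l a b : ℝ) (hb : 0 ≤ b)
    (hfa : ∀ s, 0 ≤ s → s < a → φ s < l) (hfb : l ≤ φ b) :
    a ≤ yinv φ l ∧ yinv φ l ≤ b := by
  have hbmem : b ∈ {s : ℝ | 0 ≤ s ∧ l ≤ φ s} := ⟨hb, hfb⟩
  constructor
  · refine le_csInf ⟨b, hbmem⟩ ?_
    rintro s ⟨hs0, hls⟩
    by_contra h
    push_neg at h
    exact absurd hls (not_le.2 (hfa s hs0 h))
  · exact csInf_le ⟨0, fun s hs => hs.1⟩ hbmem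

lemma philog_bounds (q β l : ℝ) (hq : 1 < q) (hβ : 0 < β) (hl : Real.exp 1 ≤ l) :
    l ^ (1/q) * (3 * Real.log l) ^ (-(β/q)) ≤
        yinv (fun x => x ^ q * (1 + max 0 (Real.log x)) ^ β) l ∧
      yinv (fun x => x ^ q * (1 + max 0 (Real.log x)) ^ β) l ≤
        (max (2*q) (16*β^2+1)) ^ (β/q) * (l ^ (1/q) * Real.log l ^ (-(β/q))) := by
  have hl0 : (0:ℝ) < l := lt_of_lt_of_le (Real.exp_pos 1) hl
  set L := Real.log l with hLdef
  have hL1 : 1 ≤ L := by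
    rw [hLdef, Real.le_log_iff_exp_le hl0]; simpa using hl
  have hL0 : (0:ℝ) < L := lt_of_lt_of_le one_pos hL1
  have hq0 : (0:ℝ) < q := lt_trans one_pos hq
  clear_value L
  set C0 := max (2*q) (16*β^2+1) with hC0def
  have hC0_2q : 2*q ≤ C0 := le_max_left _ _
  have hC0_β : 16*β^2+1 ≤ C0 := le_max_right _ _
  have hC01 : (1:ℝ) ≤ C0 := le_trans (by nlinarith) hC0_2q
  have hC00 : (0:ℝ) < C0 := lt_of_lt_of_le one_pos hC01
  clear_value C0
  set a := l ^ (1/q) * (3 * L) ^ (-(β/q)) with hadef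
  set b := C0 ^ (β/q) * (l ^ (1/q) * L ^ (-(β/q))) with hbdef
  have h3L : (0:ℝ) < 3 * L := by linarith
  clear_value a b
  have hb0 : (0:ℝ) < b := by rw [hbdef]; positivity
  have hqq : 1/q * q = 1 := by field_simp
  have hβq : -(β/q) * q = -β := by field_simp
  have ha_le : a ≤ l ^ (1/q) := by
    have h1 : (3 * L) ^ (-(β/q)) ≤ 1 :=
      Real.rpow_le_one_of_one_le_of_nonpos (by linarith)
        (neg_nonpos.mpr (by positivity))
    calc a = l ^ (1/q) * (3 * L) ^ (-(β/q)) := hadef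
      _ ≤ l ^ (1/q) * 1 :=
          mul_le_mul_of_nonneg_left h1 (le_of_lt (Real.rpow_pos_of_pos hl0 _))
      _ = l ^ (1/q) := mul_one _
  refine yinv_bound _ _ _ _ hb0.le ?_ ?_
  · -- lower bound condition: s < a ⇒ φ s < l
    intro x hx0 hxa
    have hxle : x ≤ l ^ (1/q) := le_trans hxa.le ha_le
    have haq : a ^ q = l * (3*L) ^ (-β) := by
      rw [hadef, Real.mul_rpow (le_of_lt (Real.rpow_pos_of_pos hl0 _))
          (le_of_lt (Real.rpow_pos_of_pos h3L _)),
        rpow_rpow' _ _ _ hl0.le, rpow_rpow' _ _ _ h3L.le, hqq, hβq, Real.rpow_one]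
    have hxq : x ^ q ≤ l * (3*L) ^ (-β) := by
      rw [← haq]; exact Real.rpow_le_rpow hx0 hxa.le hq0.le
    have hlog : 1 + max 0 (Real.log x) ≤ 2 * L := by
      have : max 0 (Real.log x) ≤ L := by
        rcases le_or_gt x 1 with h1 | h1
        · exact max_le hL0.le (le_trans (Real.log_nonpos hx0 h1) hL0.le)
        · refine max_le hL0.le ?_
          have : Real.log x ≤ Real.log (l ^ (1/q)) :=
            Real.log_le_log (lt_trans one_pos h1) hxle
          rw [Real.log_rpow hl0] at this
          refine le_trans this ?_
          have h1q : 1/q ≤ 1 := by rw [div_le_one hq0]; linarith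
          have : (1:ℝ)/q * Real.log l ≤ 1 * Real.log l :=
            mul_le_mul_of_nonneg_right h1q (by rw [← hLdef]; exact hL0.le)
          rw [← hLdef] at this ⊢
          linarith
      linarith
    have hlogq : (1 + max 0 (Real.log x)) ^ β ≤ (2*L) ^ β :=
      Real.rpow_le_rpow (by positivity) hlog hβ.le
    have hmul : x ^ q * (1 + max 0 (Real.log x)) ^ β ≤
        (l * (3*L) ^ (-β)) * (2*L) ^ β := by
      apply mul_le_mul hxq hlogq (by positivity) (by positivity)
    refine lt_of_le_of_lt hmul ?_
    have : (l * (3*L) ^ (-β)) * (2*L) ^ β = l * (2/3 : ℝ) ^ β := by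
      rw [Real.rpow_neg h3L.le, mul_assoc, inv_mul_eq_div, ← Real.div_rpow (by linarith) h3L.le]
      congr 2
      field_simp
    rw [this]
    have h23 : ((2:ℝ)/3) ^ β < 1 :=
      Real.rpow_lt_one (by norm_num) (by norm_num) hβ
    nlinarith [Real.rpow_pos_of_pos (show (0:ℝ) < 2/3 by norm_num) β]
  · -- upper bound condition: l ≤ φ b
    have hbq : b ^ q = C0 ^ β * l * L ^ (-β) := by
      rw [hbdef, Real.mul_rpow (le_of_lt (Real.rpow_pos_of_pos hC00 _)) (by positivity),
        Real.mul_rpow (le_of_lt (Real.rpow_pos_of_pos hl0 _))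
          (le_of_lt (Real.rpow_pos_of_pos hL0 _)),
        rpow_rpow' _ _ _ hC00.le, rpow_rpow' _ _ _ hl0.le, rpow_rpow' _ _ _ hL0.le,
        hqq, hβq, Real.rpow_one]
      have : β/q*q = β := by field_simp
      rw [this, mul_assoc]
    have hlogb : L / C0 ≤ 1 + max 0 (Real.log b) := by
      rcases le_or_gt L C0 with hcase | hcase
      · have : L / C0 ≤ 1 := (div_le_one hC00).mpr hcase
        have h0 : (0:ℝ) ≤ max 0 (Real.log b) := le_max_left _ _
        linarith
      · -- L > C0 ≥ 16 β² + 1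
        have hLβ : 16 * β^2 < L := lt_of_le_of_lt (by linarith) hcase
        have hsqrt : 4 * β ≤ Real.sqrt L := by
          rw [show (4:ℝ)*β = Real.sqrt ((4*β)^2) from (Real.sqrt_sq (by positivity)).symm]
          exact Real.sqrt_le_sqrt (by nlinarith)
        have hlogL : Real.log L ≤ 2 * Real.sqrt L := by
          have h1 : Real.log L = 2 * Real.log (Real.sqrt L) := by
            rw [Real.log_sqrt hL0.le]; ring
          have h2 : Real.log (Real.sqrt L) ≤ Real.sqrt L - 1 :=
            Real.log_le_sub_one_of_pos (Real.sqrt_pos.mpr hL0)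
          nlinarith [Real.sqrt_nonneg L]
        have hβlogL : β * Real.log L ≤ L / 2 := by
          have hs : Real.sqrt L * Real.sqrt L = L := Real.mul_self_sqrt hL0.le
          nlinarith [Real.sqrt_nonneg L, hβ.le,
            Real.log_nonneg hL1]
        have hlogb' : L / (2*q) ≤ Real.log b := by
          rw [hbdef, Real.log_mul (by positivity) (by positivity),
            Real.log_mul (by positivity) (by positivity),
            Real.log_rpow hC00, Real.log_rpow hl0, Real.log_rpow hL0]
          have hlC0 : 0 ≤ Real.log C0 := Real.log_nonneg hC01
          have key : L / (2*q) ≤ 1/q * L + -(β/q) * Real.log L := by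
            rw [div_le_iff₀ (show (0:ℝ) < 2*q by positivity)]
            have expand : (1/q * L + -(β/q) * Real.log L) * (2*q)
                = 2 * L - 2 * (β * Real.log L) := by field_simp; ring
            rw [expand]; linarith
          have hterm : 0 ≤ β/q * Real.log C0 :=
            mul_nonneg (div_nonneg hβ.le hq0.le) hlC0
          rw [← hLdef]
          linarith
        have : L / C0 ≤ L / (2*q) := by
          apply div_le_div_of_nonneg_left hL0.le (by positivity) (by linarith)
        have h0 : Real.log b ≤ max 0 (Real.log b) := le_max_right _ _
        linarith
    show l ≤ b ^ q * (1 + max 0 (Real.log b)) ^ β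
    have hmul : (C0 ^ β * l * L ^ (-β)) * (L / C0) ^ β ≤
        b ^ q * (1 + max 0 (Real.log b)) ^ β := by
      rw [hbq]
      apply mul_le_mul_of_nonneg_left
        (Real.rpow_le_rpow (by positivity) hlogb hβ.le) (by positivity)
    refine le_trans (le_of_eq ?_) hmul
    rw [Real.div_rpow hL0.le hC00.le, Real.rpow_neg hL0.le]
    have hLβ0 : L ^ β ≠ 0 := ne_of_gt (Real.rpow_pos_of_pos hL0 _)
    have hCβ0 : C0 ^ β ≠ 0 := ne_of_gt (Real.rpow_pos_of_pos hC00 _)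
    field_simp

/-- for `ξ̃(λ) = λ^{r-ε}(1+log⁺λ)^δ` and
`ζ(λ) = λ^θ(1+log⁺λ)^ν`, one has `ξ̃⁻¹(λ) ζ⁻¹(λ) (log λ)^m ≈ λ` for `λ ≥ e`. -/
theorem inverse_product_example
    (m : ℕ) (r s ε δ : ℝ) (hr1 : 1 < r) (hr2 : r < 2)
    (hs1 : 1 < s) (hsr : s < r)
    (hε0 : 0 < ε) (hε1 : ε < r - s)
    (hδ0 : 0 < δ) (hδ1 : δ < m * (r - ε))
    (θ ν : ℝ) (hθ : θ = (r - ε) / (r - ε - 1)) (hν : ν = θ * (m - δ / (r - ε))) :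
    ∃ c₁, 0 < c₁ ∧ ∃ c₂, 0 < c₂ ∧ ∀ l : ℝ, Real.exp 1 ≤ l →
      c₁ * l ≤
          yinv (fun x => x ^ (r - ε) * (1 + max 0 (Real.log x)) ^ δ) l *
            yinv (fun x => x ^ θ * (1 + max 0 (Real.log x)) ^ ν) l *
            Real.log l ^ m ∧
        yinv (fun x => x ^ (r - ε) * (1 + max 0 (Real.log x)) ^ δ) l *
            yinv (fun x => x ^ θ * (1 + max 0 (Real.log x)) ^ ν) l *
            Real.log l ^ m ≤ c₂ * l := by
  set p := r - ε with hpdef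
  have hp1 : 1 < p := by simp only [hpdef]; linarith
  have hp0 : 0 < p := lt_trans one_pos hp1
  have hp1' : 0 < p - 1 := by linarith
  have hθ1 : 1 < θ := by
    rw [hθ, lt_div_iff₀ hp1']; linarith
  have hθ0 : 0 < θ := lt_trans one_pos hθ1
  have hν0 : 0 < ν := by
    rw [hν]
    have : δ / p < m := by rw [div_lt_iff₀ hp0]; linarith
    have h2 : (0:ℝ) < m - δ / p := by linarith
    positivity
  have E1 : 1/p + 1/θ = 1 := by
    rw [hθ]; field_simp; ring
  have E2 : δ/p + ν/θ = (m:ℝ) := by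
    have hθne : θ ≠ 0 := ne_of_gt hθ0
    rw [hν]
    field_simp
    ring
  set K₁ := (max (2*p) (16*δ^2+1)) ^ (δ/p) with hK₁def
  set K₂ := (max (2*θ) (16*ν^2+1)) ^ (ν/θ) with hK₂def
  have hK₁0 : 0 < K₁ := Real.rpow_pos_of_pos (lt_of_lt_of_le (by positivity) (le_max_left _ _)) _
  have hK₂0 : 0 < K₂ := Real.rpow_pos_of_pos (lt_of_lt_of_le (by positivity) (le_max_left _ _)) _
  refine ⟨(3:ℝ) ^ (-(m:ℝ)), Real.rpow_pos_of_pos (by norm_num) _, K₁ * K₂, by positivity,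
    fun l hl => ?_⟩
  have hl0 : (0:ℝ) < l := lt_of_lt_of_le (Real.exp_pos 1) hl
  set L := Real.log l with hLdef
  have hL1 : 1 ≤ L := by
    rw [hLdef, Real.le_log_iff_exp_le hl0]; simpa using hl
  have hL0 : (0:ℝ) < L := lt_of_lt_of_le one_pos hL1
  have h3L : (0:ℝ) < 3 * L := by linarith
  obtain ⟨hA1, hA2⟩ := philog_bounds p δ l hp1 hδ0 hl
  obtain ⟨hB1, hB2⟩ := philog_bounds θ ν l hθ1 hν0 hl
  rw [← hLdef] at hA1 hA2 hB1 hB2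
  set A := yinv (fun x => x ^ p * (1 + max 0 (Real.log x)) ^ δ) l with hAdef
  set B := yinv (fun x => x ^ θ * (1 + max 0 (Real.log x)) ^ ν) l with hBdef
  have ha₁0 : (0:ℝ) < l ^ (1/p) * (3*L) ^ (-(δ/p)) := by positivity
  have ha₂0 : (0:ℝ) < l ^ (1/θ) * (3*L) ^ (-(ν/θ)) := by positivity
  have hA0 : 0 < A := lt_of_lt_of_le ha₁0 hA1
  have hB0 : 0 < B := lt_of_lt_of_le ha₂0 hB1
  have hLm0 : (0:ℝ) < L ^ m := by positivity
  have hcast : L ^ m = L ^ (m:ℝ) := (Real.rpow_natCast L m).symm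
  have hsum : -(δ/p) + -(ν/θ) = -(m:ℝ) := by rw [← E2]; ring
  constructor
  · have eq_low : (l ^ (1/p) * (3*L) ^ (-(δ/p))) * (l ^ (1/θ) * (3*L) ^ (-(ν/θ))) * L ^ m
        = (3:ℝ) ^ (-(m:ℝ)) * l := by
      have step : (l ^ (1/p) * (3*L) ^ (-(δ/p))) * (l ^ (1/θ) * (3*L) ^ (-(ν/θ))) * L ^ m
          = (l ^ (1/p) * l ^ (1/θ)) * ((3*L) ^ (-(δ/p)) * (3*L) ^ (-(ν/θ))) * L ^ m := by
        ring
      rw [step, ← Real.rpow_add hl0, ← Real.rpow_add h3L, E1, hsum, Real.rpow_one,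
        Real.mul_rpow (by norm_num) hL0.le, hcast, mul_assoc, mul_assoc,
        ← Real.rpow_add hL0]
      simp [mul_comm]
    calc (3:ℝ) ^ (-(m:ℝ)) * l
        = (l ^ (1/p) * (3*L) ^ (-(δ/p))) * (l ^ (1/θ) * (3*L) ^ (-(ν/θ))) * L ^ m :=
          eq_low.symm
      _ ≤ A * B * L ^ m := by
          apply mul_le_mul_of_nonneg_right _ hLm0.le
          exact mul_le_mul hA1 hB1 ha₂0.le hA0.le
  · have eq_high : (K₁ * (l ^ (1/p) * L ^ (-(δ/p)))) * (K₂ * (l ^ (1/θ) * L ^ (-(ν/θ)))) * L ^ m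
        = (K₁ * K₂) * l := by
      have step : (K₁ * (l ^ (1/p) * L ^ (-(δ/p)))) * (K₂ * (l ^ (1/θ) * L ^ (-(ν/θ)))) * L ^ m
          = (K₁ * K₂) * ((l ^ (1/p) * l ^ (1/θ)) * ((L ^ (-(δ/p)) * L ^ (-(ν/θ))) * L ^ m)) := by
        ring
      rw [step, ← Real.rpow_add hl0, ← Real.rpow_add hL0, E1, hsum, Real.rpow_one,
        hcast, ← Real.rpow_add hL0]
      simp
    calc A * B * L ^ m
        ≤ (K₁ * (l ^ (1/p) * L ^ (-(δ/p)))) * (K₂ * (l ^ (1/θ) * L ^ (-(ν/θ)))) * L ^ m := by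
          apply mul_le_mul_of_nonneg_right _ hLm0.le
          exact mul_le_mul hA2 hB2 hB0.le (by positivity)
      _ = (K₁ * K₂) * l := eq_high
end

section
/- Fix m ∈ ℕ, 1<r<2 and r<p<r'. Let s, ε, δ, τ satisfy 1<s<r, 0<ε<min{r−s, p'−r}, 0<δ<m(r−ε), and 0<τ<min{p'−1, p'−r−ε}. Let β ≥ (1/(r−ε) − 1/(p'−τ))^{−1} and α ≥ βδ/(r−ε). Define ξ̃(λ)=λ^{r−ε}(1+log⁺λ)^δ, η(λ)=λ^{p'−τ}, and φ(λ)=λ^β(1+log⁺λ)^α. Then there exists C>0 such that η^{−1}(λ)·φ^{−1}(λ) ≤ C·ξ̃^{−1}(λ) for every λ ≥ e. Moreover, η ∈ B_{p'} and ξ̃ has upper type r and lower type s. -/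
open MeasureTheory Real Set Filter

lemma yinv_le' {g : ℝ → ℝ} {lam x : ℝ} (hx : 0 ≤ x) (h : lam ≤ g x) :
    yinv g lam ≤ x :=
  csInf_le ⟨0, fun _ ht => ht.1⟩ ⟨hx, h⟩

lemma yinv_nonneg' (g : ℝ → ℝ) (lam : ℝ) : 0 ≤ yinv g lam :=
  Real.sInf_nonneg (fun _ hx => hx.1)

lemma le_yinv' {g : ℝ → ℝ} {lam a : ℝ}
    (hmono : ∀ t, 0 ≤ t → t < a → g t < g a)
    (hga : g a ≤ lam) (hne : ∃ t, 0 ≤ t ∧ lam ≤ g t) : a ≤ yinv g lam := by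
  apply le_csInf hne
  rintro t ⟨ht0, htl⟩
  by_contra hlt
  push_neg at hlt
  have := hmono t ht0 hlt
  linarith

lemma logplus_mono {a b : ℝ} (ha : 0 ≤ a) (hab : a ≤ b) :
    max 0 (Real.log a) ≤ max 0 (Real.log b) := by
  rcases eq_or_lt_of_le ha with h0 | h0
  · simp [← h0, Real.log_zero]
  · exact max_le_max le_rfl (Real.log_le_log h0 hab)

lemma xi_strictmono {c d : ℝ} (hc : 0 < c) (hd : 0 ≤ d) {t a : ℝ}
    (ht : 0 ≤ t) (hta : t < a) :
    t ^ c * (1 + max 0 (Real.log t)) ^ d < a ^ c * (1 + max 0 (Real.log a)) ^ d := by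
  have h1 : t ^ c < a ^ c := Real.rpow_lt_rpow ht hta hc
  have h2 : (1 + max 0 (Real.log t)) ^ d ≤ (1 + max 0 (Real.log a)) ^ d := by
    apply Real.rpow_le_rpow (by positivity) _ hd
    have := logplus_mono ht hta.le
    linarith
  have h3 : (0:ℝ) < (1 + max 0 (Real.log a)) ^ d := by positivity
  calc t ^ c * (1 + max 0 (Real.log t)) ^ d
      ≤ t ^ c * (1 + max 0 (Real.log a)) ^ d :=
        mul_le_mul_of_nonneg_left h2 (Real.rpow_nonneg ht c)
    _ < a ^ c * (1 + max 0 (Real.log a)) ^ d := mul_lt_mul_of_pos_right h1 h3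

lemma aux_main (q re β α δ : ℝ)
    (hq1 : 1 < q) (hre1 : 1 < re) (hreq : re < q)
    (hβ1 : 1 < β) (hα0 : 0 < α) (hδ0 : 0 < δ)
    (hinv : 1/β + 1/q ≤ 1/re) (hαδ : δ ≤ α * re / β) :
    ∃ C, 0 < C ∧ ∀ l : ℝ, Real.exp 1 ≤ l →
      yinv (fun x => x ^ q) l *
          yinv (fun x => x ^ β * (1 + max 0 (Real.log x)) ^ α) l ≤
        C * yinv (fun x => x ^ re * (1 + max 0 (Real.log x)) ^ δ) l := by
  have hβ0 : (0:ℝ) < β := by linarith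
  have hre0 : (0:ℝ) < re := by linarith
  have hq0 : (0:ℝ) < q := by linarith
  set K : ℝ := (α/β) * (Real.log (2*α) - 1) with hK
  set c : ℝ := max (Real.exp K) ((4*β) ^ (α/β)) with hc
  have hc0 : 0 < c := lt_of_lt_of_le (Real.exp_pos K) (le_max_left _ _)
  have hcK : K ≤ Real.log c := by
    calc K = Real.log (Real.exp K) := (Real.log_exp K).symm
    _ ≤ Real.log c := Real.log_le_log (Real.exp_pos K) (le_max_left _ _)
  have hc4β : (4*β) ^ (α/β) ≤ c := le_max_right _ _
  set C : ℝ := max c 1 with hCdef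
  have hC1 : (1:ℝ) ≤ C := le_max_right _ _
  have hC0 : (0:ℝ) < C := by linarith
  have hcC : c ≤ C := le_max_left _ _
  refine ⟨C, hC0, fun l hl => ?_⟩
  have hl1 : (1:ℝ) ≤ l := le_trans (by linarith [Real.add_one_le_exp 1]) hl
  have hl0 : (0:ℝ) < l := by linarith
  set L : ℝ := Real.log l with hL
  have hL1 : 1 ≤ L := by
    rw [hL, ← Real.log_exp 1]
    exact Real.log_le_log (Real.exp_pos 1) hl
  set xη : ℝ := l ^ (1/q) with hxη
  set xφ : ℝ := c * l ^ (1/β) * (1+L) ^ (-(α/β)) with hxφ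
  have hxηpos : 0 < xη := Real.rpow_pos_of_pos hl0 _
  have hxφpos : 0 < xφ := by
    apply mul_pos (mul_pos hc0 (Real.rpow_pos_of_pos hl0 _))
    exact Real.rpow_pos_of_pos (by linarith) _
  -- Step A : yinv η l ≤ xη
  have stepA : yinv (fun x => x ^ q) l ≤ xη := by
    apply yinv_le' hxηpos.le
    show l ≤ (l ^ (1/q)) ^ q
    rw [← Real.rpow_mul hl0.le, one_div, inv_mul_cancel₀ hq0.ne', Real.rpow_one]
  -- log xφ lower bound
  have hlogxφ : (L-1)/(2*β) ≤ Real.log xφ := by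
    have hlx : Real.log xφ = Real.log c + (1/β)*L + (-(α/β)) * Real.log (1+L) := by
      rw [hxφ, Real.log_mul (by positivity) (by positivity),
        Real.log_mul hc0.ne' (by positivity), Real.log_rpow hl0,
        Real.log_rpow (by linarith : (0:ℝ) < 1+L)]
    have hbound : Real.log (1+L) ≤ (1+L)/(2*α) - 1 + Real.log (2*α) := by
      have h1 : Real.log ((1+L)/(2*α)) ≤ (1+L)/(2*α) - 1 :=
        Real.log_le_sub_one_of_pos (by positivity)
      have h2 : Real.log ((1+L)/(2*α)) = Real.log (1+L) - Real.log (2*α) :=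
        Real.log_div (by linarith) (by positivity)
      linarith
    rw [hlx]
    have hαβ : 0 < α/β := by positivity
    have hkey : (α/β) * Real.log (1+L) ≤ (1+L)/(2*β) + K := by
      rw [hK]
      calc (α/β) * Real.log (1+L) ≤ (α/β) * ((1+L)/(2*α) - 1 + Real.log (2*α)) :=
            mul_le_mul_of_nonneg_left hbound hαβ.le
        _ = (1+L)/(2*β) + (α/β) * (Real.log (2*α) - 1) := by
            field_simp
            ring
    have e1 : (1/β)*L - (1+L)/(2*β) = (L-1)/(2*β) := by
      field_simp
      ring
    linarith
  have hlogxφ0 : 0 ≤ Real.log xφ := by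
    have h : 0 ≤ (L-1)/(2*β) := div_nonneg (by linarith) (by linarith)
    linarith
  have hmaxxφ : max 0 (Real.log xφ) = Real.log xφ := max_eq_right hlogxφ0
  have h1L4β : (1+L)/(4*β) ≤ 1 + Real.log xφ := by
    have h : (1+L)/(4*β) ≤ 1 + (L-1)/(2*β) := by
      rw [div_le_iff₀ (by positivity : (0:ℝ) < 4*β)]
      have e : (1 + (L-1)/(2*β)) * (4*β) = 4*β + 2*(L-1) := by
        field_simp
        ring
      rw [e]
      linarith
    linarith
  -- Step B : yinv φ l ≤ xφ
  have stepB : yinv (fun x => x ^ β * (1 + max 0 (Real.log x)) ^ α) l ≤ xφ := by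
    apply yinv_le' hxφpos.le
    show l ≤ xφ ^ β * (1 + max 0 (Real.log xφ)) ^ α
    rw [hmaxxφ]
    have e1 : (l ^ (1/β)) ^ β = l := by
      rw [← Real.rpow_mul hl0.le, one_div, inv_mul_cancel₀ hβ0.ne', Real.rpow_one]
    have e2 : ((1+L) ^ (-(α/β))) ^ β = (1+L) ^ (-α) := by
      rw [← Real.rpow_mul (by linarith : (0:ℝ) ≤ 1+L)]
      congr 1
      field_simp
    have hxφβ : xφ ^ β = c ^ β * l * (1+L) ^ (-α) := by
      rw [hxφ, Real.mul_rpow (by positivity) (by positivity),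
        Real.mul_rpow hc0.le (by positivity), e1, e2]
    rw [hxφβ]
    have hcβ : (4*β) ^ α ≤ c ^ β := by
      have h1 : ((4*β) ^ (α/β)) ^ β ≤ c ^ β :=
        Real.rpow_le_rpow (by positivity) hc4β hβ0.le
      rwa [← Real.rpow_mul (by positivity : (0:ℝ) ≤ 4*β), div_mul_cancel₀ α hβ0.ne'] at h1
    have hαterm : (1+L) ^ α / (4*β) ^ α ≤ (1 + Real.log xφ) ^ α := by
      have h1 : ((1+L)/(4*β)) ^ α ≤ (1 + Real.log xφ) ^ α :=
        Real.rpow_le_rpow (by positivity) h1L4β hα0.le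
      rwa [Real.div_rpow (by linarith) (by positivity)] at h1
    have hid : (1+L) ^ (-α) * (1+L) ^ α = 1 := by
      rw [← Real.rpow_add (by linarith : (0:ℝ) < 1+L)]
      simp
    calc l = l * ((1+L) ^ (-α) * (1+L) ^ α) := by rw [hid, mul_one]
      _ = l * (1+L) ^ (-α) * ((4*β) ^ α * ((1+L) ^ α / (4*β) ^ α)) := by
          have : (4*β) ^ α * ((1+L) ^ α / (4*β) ^ α) = (1+L) ^ α := by
            field_simp
          rw [this]
          ring
      _ ≤ l * (1+L) ^ (-α) * (c ^ β * ((1 + Real.log xφ) ^ α)) := by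
          apply mul_le_mul_of_nonneg_left _ (by positivity)
          exact mul_le_mul hcβ hαterm (by positivity) (by positivity)
      _ = c ^ β * l * (1+L) ^ (-α) * (1 + Real.log xφ) ^ α := by ring
  -- Step C
  set a : ℝ := xη * xφ / C with hadef
  have ha0 : 0 < a := by positivity
  have hafact : a = (c/C) * l ^ (1/q + 1/β) * (1+L) ^ (-(α/β)) := by
    rw [hadef, hxη, hxφ, Real.rpow_add hl0]
    ring
  have hcC1 : c/C ≤ 1 := (div_le_one hC0).2 hcC
  have hu1 : (1+L) ^ (-(α/β)) ≤ 1 :=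
    Real.rpow_le_one_of_one_le_of_nonpos (by linarith)
      (neg_nonpos.2 (by positivity))
  have hexp1 : 1/q + 1/β ≤ 1 := by
    have h1 : 1/re ≤ 1 := by
      rw [div_le_one hre0]; linarith
    linarith
  have hlθ : l ^ (1/q + 1/β) ≤ l := by
    calc l ^ (1/q + 1/β) ≤ l ^ (1:ℝ) :=
          Real.rpow_le_rpow_of_exponent_le hl1 hexp1
      _ = l := Real.rpow_one l
  have hal : a ≤ l := by
    rw [hafact]
    calc (c/C) * l ^ (1/q + 1/β) * (1+L) ^ (-(α/β))
        ≤ 1 * l * 1 := by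
          apply mul_le_mul _ hu1 (by positivity) (by positivity)
          apply mul_le_mul hcC1 hlθ (by positivity) zero_le_one
      _ = l := by ring
  have haexp : a ^ re = (c/C) ^ re * l ^ ((1/q + 1/β)*re) * (1+L) ^ (-(α/β)*re) := by
    rw [hafact, Real.mul_rpow (by positivity) (by positivity),
      Real.mul_rpow (by positivity) (by positivity),
      ← Real.rpow_mul hl0.le, ← Real.rpow_mul (by linarith : (0:ℝ) ≤ 1+L)]
  have b1 : (c/C) ^ re ≤ 1 := Real.rpow_le_one (by positivity) hcC1 hre0.le
  have b2 : l ^ ((1/q + 1/β)*re) ≤ l := by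
    calc l ^ ((1/q + 1/β)*re) ≤ l ^ (1:ℝ) := by
          apply Real.rpow_le_rpow_of_exponent_le hl1
          calc (1/q + 1/β)*re ≤ (1/re)*re := mul_le_mul_of_nonneg_right (by linarith) hre0.le
            _ = 1 := by field_simp
      _ = l := Real.rpow_one l
  have b3 : (1+L) ^ (-(α/β)*re) ≤ (1+L) ^ (-δ) := by
    apply Real.rpow_le_rpow_of_exponent_le (by linarith)
    have h : -(α/β)*re = -(α*re/β) := by ring
    rw [h]
    linarith
  have b4 : (1 + max 0 (Real.log a)) ^ δ ≤ (1+L) ^ δ := by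
    apply Real.rpow_le_rpow (by positivity) _ hδ0.le
    have h1 := logplus_mono ha0.le hal
    have h2 : max 0 (Real.log l) = L := max_eq_right (by linarith)
    rw [h2] at h1
    linarith
  have hid2 : (1+L) ^ (-δ) * (1+L) ^ δ = 1 := by
    rw [← Real.rpow_add (by linarith : (0:ℝ) < 1+L)]
    simp
  have hξa : a ^ re * (1 + max 0 (Real.log a)) ^ δ ≤ l := by
    have h5 : a ^ re ≤ l * (1+L) ^ (-δ) := by
      rw [haexp]
      calc (c/C) ^ re * l ^ ((1/q + 1/β)*re) * (1+L) ^ (-(α/β)*re)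
          ≤ 1 * l * (1+L) ^ (-δ) := by
            apply mul_le_mul _ b3 (by positivity) (by positivity)
            exact mul_le_mul b1 b2 (by positivity) zero_le_one
        _ = l * (1+L) ^ (-δ) := by ring
    calc a ^ re * (1 + max 0 (Real.log a)) ^ δ
        ≤ (l * (1+L) ^ (-δ)) * (1+L) ^ δ :=
          mul_le_mul h5 b4 (by positivity) (by positivity)
      _ = l * ((1+L) ^ (-δ) * (1+L) ^ δ) := by ring
      _ = l := by rw [hid2, mul_one]
  have hne : ∃ t, 0 ≤ t ∧ l ≤ t ^ re * (1 + max 0 (Real.log t)) ^ δ := by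
    refine ⟨l, hl0.le, ?_⟩
    have h1 : l ≤ l ^ re := by
      calc l = l ^ (1:ℝ) := (Real.rpow_one l).symm
        _ ≤ l ^ re := Real.rpow_le_rpow_of_exponent_le hl1 hre1.le
    have h2 : (1:ℝ) ≤ (1 + max 0 (Real.log l)) ^ δ :=
      Real.one_le_rpow (by linarith [le_max_left (0:ℝ) (Real.log l)]) hδ0.le
    calc l ≤ l ^ re := h1
      _ = l ^ re * 1 := (mul_one _).symm
      _ ≤ l ^ re * (1 + max 0 (Real.log l)) ^ δ :=
          mul_le_mul_of_nonneg_left h2 (Real.rpow_nonneg hl0.le re)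
  have stepC : a ≤ yinv (fun x => x ^ re * (1 + max 0 (Real.log x)) ^ δ) l :=
    le_yinv' (fun t ht hta => xi_strictmono hre0 hδ0.le ht hta) hξa hne
  calc yinv (fun x => x ^ q) l *
        yinv (fun x => x ^ β * (1 + max 0 (Real.log x)) ^ α) l
      ≤ xη * xφ := mul_le_mul stepA stepB (yinv_nonneg' _ _) hxηpos.le
    _ = C * a := by
        rw [hadef]
        field_simp
    _ ≤ C * yinv (fun x => x ^ re * (1 + max 0 (Real.log x)) ^ δ) l :=
        mul_le_mul_of_nonneg_left stepC hC0.le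

lemma aux_bp (q τ : ℝ) (hτ : 0 < τ) : MemBp (fun x => x ^ (q - τ)) q := by
  refine ⟨1, one_pos, ?_⟩
  have hint : IntegrableOn (fun t : ℝ => t ^ (-(τ + 1))) (Ioi (1:ℝ)) volume :=
    integrableOn_Ioi_rpow_of_lt (by linarith) one_pos
  apply hint.congr_fun _ measurableSet_Ioi
  intro t ht
  have ht0 : (0:ℝ) < t := lt_trans one_pos ht
  show t ^ (-(τ+1)) = t ^ (q-τ) / t ^ (q+1)
  rw [← Real.rpow_sub ht0]
  ring_nf

-- upper type
lemma aux_upper (r ε δ : ℝ) (hre : 1 < r - ε) (hε : 0 < ε) (hδ : 0 < δ) :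
    ∃ C, 0 < C ∧ ∀ s : ℝ, 1 ≤ s → ∀ t : ℝ, 0 ≤ t →
      (s*t) ^ (r-ε) * (1 + max 0 (Real.log (s*t))) ^ δ ≤
      C * s ^ r * (t ^ (r-ε) * (1 + max 0 (Real.log t)) ^ δ) := by
  refine ⟨(1 + δ/ε) ^ δ, by positivity, fun σ hσ t ht => ?_⟩
  have hσ0 : (0:ℝ) < σ := lt_of_lt_of_le one_pos hσ
  rcases eq_or_lt_of_le ht with h0 | ht0
  · rw [← h0]
    rw [mul_zero]
    rw [Real.zero_rpow (by linarith)]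
    simp
  -- main case t > 0
  have hlog : max 0 (Real.log (σ * t)) ≤ Real.log σ + max 0 (Real.log t) := by
    have hlσ : 0 ≤ Real.log σ := Real.log_nonneg hσ
    rw [Real.log_mul (by linarith) (by linarith)]
    have h2 : Real.log t ≤ max 0 (Real.log t) := le_max_right _ _
    have h3 : (0:ℝ) ≤ max 0 (Real.log t) := le_max_left _ _
    rw [max_le_iff]
    exact ⟨by linarith, by linarith⟩
  have hfac : 1 + max 0 (Real.log (σ*t)) ≤ (1 + Real.log σ) * (1 + max 0 (Real.log t)) := by
    have h1 : 0 ≤ Real.log σ := Real.log_nonneg hσ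
    have h2 : 0 ≤ max 0 (Real.log t) := le_max_left _ _
    nlinarith
  -- (1 + log σ) ≤ (1 + δ/ε) * σ^(ε/δ)
  have hls : 1 + Real.log σ ≤ (1 + δ/ε) * σ ^ (ε/δ) := by
    have h1 : Real.log σ = (δ/ε) * Real.log (σ ^ (ε/δ)) := by
      rw [Real.log_rpow hσ0]; field_simp
    have h2 : Real.log (σ ^ (ε/δ)) ≤ σ ^ (ε/δ) - 1 :=
      Real.log_le_sub_one_of_pos (Real.rpow_pos_of_pos hσ0 _)
    have h3 : (1:ℝ) ≤ σ ^ (ε/δ) := Real.one_le_rpow hσ (by positivity)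
    have h4 : 0 < δ/ε := by positivity
    nlinarith
  have hσtr : (σ*t) ^ (r-ε) = σ^(r-ε) * t^(r-ε) := Real.mul_rpow hσ0.le ht
  have key1 : (1 + max 0 (Real.log (σ*t))) ^ δ ≤
      ((1 + δ/ε) * σ ^ (ε/δ)) ^ δ * (1 + max 0 (Real.log t)) ^ δ := by
    rw [← Real.mul_rpow (by positivity) (by positivity)]
    apply Real.rpow_le_rpow (by positivity) _ hδ.le
    calc 1 + max 0 (Real.log (σ*t)) ≤ (1 + Real.log σ) * (1 + max 0 (Real.log t)) := hfac
      _ ≤ ((1 + δ/ε) * σ ^ (ε/δ)) * (1 + max 0 (Real.log t)) := by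
          apply mul_le_mul_of_nonneg_right hls (by positivity)
  have key2 : ((1 + δ/ε) * σ ^ (ε/δ)) ^ δ = (1 + δ/ε)^δ * σ^ε := by
    rw [Real.mul_rpow (by positivity) (by positivity), ← Real.rpow_mul hσ0.le]
    congr 1
    field_simp
  have hσr : σ^(r-ε) * σ^ε = σ^r := by rw [← Real.rpow_add hσ0]; ring_nf
  calc (σ*t) ^ (r-ε) * (1 + max 0 (Real.log (σ*t))) ^ δ
      ≤ σ^(r-ε) * t^(r-ε) * ((1 + δ/ε)^δ * σ^ε * (1 + max 0 (Real.log t)) ^ δ) := by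
        rw [hσtr]
        apply mul_le_mul_of_nonneg_left _ (by positivity)
        rw [← key2]; exact key1
    _ = (1 + δ/ε)^δ * σ^r * (t^(r-ε) * (1 + max 0 (Real.log t)) ^ δ) := by
        rw [← hσr]; ring

-- lower type
lemma aux_lower (r ε δ s : ℝ) (hs : 0 < s) (hsre : s ≤ r - ε) (hδ : 0 ≤ δ) :
    ∀ σ : ℝ, 0 ≤ σ → σ ≤ 1 → ∀ t : ℝ, 0 ≤ t →
      (σ*t) ^ (r-ε) * (1 + max 0 (Real.log (σ*t))) ^ δ ≤
      1 * σ ^ s * (t ^ (r-ε) * (1 + max 0 (Real.log t)) ^ δ) := by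
  intro σ hσ0 hσ1 t ht
  rcases eq_or_lt_of_le hσ0 with h0 | hσp
  · rw [← h0, zero_mul, Real.zero_rpow (by linarith), Real.zero_rpow hs.ne']
    simp
  rcases eq_or_lt_of_le ht with h0 | htp
  · rw [← h0, mul_zero, Real.zero_rpow (by linarith)]
    simp
  have hσtr : (σ*t) ^ (r-ε) = σ^(r-ε) * t^(r-ε) := Real.mul_rpow hσ0 ht
  have hlog : max 0 (Real.log (σ*t)) ≤ max 0 (Real.log t) := by
    have : Real.log (σ*t) ≤ Real.log t := by
      rw [Real.log_mul hσp.ne' htp.ne']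
      have := Real.log_nonpos hσ0 hσ1
      linarith
    exact max_le_max le_rfl this
  have h1 : (1 + max 0 (Real.log (σ*t))) ^ δ ≤ (1 + max 0 (Real.log t)) ^ δ := by
    apply Real.rpow_le_rpow (by positivity) (by linarith) hδ
  have h2 : σ^(r-ε) ≤ σ^s := Real.rpow_le_rpow_of_exponent_ge hσp hσ1 hsre
  rw [hσtr]
  calc σ^(r-ε) * t^(r-ε) * (1 + max 0 (Real.log (σ*t))) ^ δ
      ≤ σ^s * t^(r-ε) * (1 + max 0 (Real.log t)) ^ δ := by
        apply mul_le_mul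
        · exact mul_le_mul_of_nonneg_right h2 (Real.rpow_nonneg ht _)
        · exact h1
        · positivity
        · positivity
    _ = 1 * σ^s * (t^(r-ε) * (1 + max 0 (Real.log t)) ^ δ) := by ring
  -- need rw hσtr first

/-- for `ξ̃(λ) = λ^{r-ε}(1+log⁺λ)^δ`, `η(λ) = λ^{p'-τ}` and
`φ(λ) = λ^β(1+log⁺λ)^α`, one has `η⁻¹(λ) φ⁻¹(λ) ≲ ξ̃⁻¹(λ)` for `λ ≥ e`; moreover
`η ∈ B_{p'}` and `ξ̃` has upper type `r` and lower type `s`. -/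
theorem inverse_product_example_two
    (m : ℕ) (r p s ε δ τ β α : ℝ)
    (hr1 : 1 < r) (hr2 : r < 2) (hrp : r < p) (hpr' : p < r / (r - 1))
    (hs1 : 1 < s) (hsr : s < r)
    (hε0 : 0 < ε) (hε1 : ε < r - s) (hε2 : ε < p / (p - 1) - r)
    (hδ0 : 0 < δ) (hδ1 : δ < m * (r - ε))
    (hτ0 : 0 < τ) (hτ1 : τ < p / (p - 1) - 1) (hτ2 : τ < p / (p - 1) - r - ε)
    (hβ : (1 / (r - ε) - 1 / (p / (p - 1) - τ))⁻¹ ≤ β)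
    (hα : β * δ / (r - ε) ≤ α) :
    (∃ C, 0 < C ∧ ∀ l : ℝ, Real.exp 1 ≤ l →
      yinv (fun x => x ^ (p / (p - 1) - τ)) l *
          yinv (fun x => x ^ β * (1 + max 0 (Real.log x)) ^ α) l ≤
        C * yinv (fun x => x ^ (r - ε) * (1 + max 0 (Real.log x)) ^ δ) l) ∧
    MemBp (fun x => x ^ (p / (p - 1) - τ)) (p / (p - 1)) ∧
    HasUpperType (fun x => x ^ (r - ε) * (1 + max 0 (Real.log x)) ^ δ) r ∧
    HasLowerType (fun x => x ^ (r - ε) * (1 + max 0 (Real.log x)) ^ δ) s := by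
  have hp1 : 1 < p := lt_trans hr1 hrp
  have hp0 : 0 < p - 1 := by linarith
  have hp' : 1 < p / (p - 1) := (one_lt_div hp0).2 (by linarith)
  have hre0 : (0:ℝ) < r - ε := by linarith
  have hre1 : 1 < r - ε := by linarith
  have hq1 : 1 < p / (p - 1) - τ := by linarith
  have hq0 : (0:ℝ) < p / (p - 1) - τ := by linarith
  have hreq : r - ε < p / (p - 1) - τ := by linarith
  have hd0 : 0 < 1 / (r - ε) - 1 / (p / (p - 1) - τ) := by
    have := one_div_lt_one_div_of_lt hre0 hreq
    linarith
  have hβ1 : 1 < β := by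
    have h3 : 1 / (r - ε) - 1 / (p / (p - 1) - τ) < 1 := by
      have h4 : 1 / (r - ε) < 1 := by
        rw [div_lt_one hre0]; linarith
      linarith [one_div_pos.2 hq0]
    have hinvd : (1 / (r - ε) - 1 / (p / (p - 1) - τ))⁻¹ *
        (1 / (r - ε) - 1 / (p / (p - 1) - τ)) = 1 := inv_mul_cancel₀ hd0.ne'
    nlinarith [hβ, hd0, h3, hinvd]
  have hβ0 : (0:ℝ) < β := by linarith
  have hα0 : 0 < α := by
    have : 0 < β * δ / (r - ε) := by positivity
    linarith
  have hinv : 1 / β + 1 / (p / (p - 1) - τ) ≤ 1 / (r - ε) := by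
    have h1 : 1 ≤ β * (1 / (r - ε) - 1 / (p / (p - 1) - τ)) := by
      have h2 := mul_le_mul_of_nonneg_right hβ hd0.le
      rwa [inv_mul_cancel₀ hd0.ne'] at h2
    have h3 : 1 / β ≤ 1 / (r - ε) - 1 / (p / (p - 1) - τ) := by
      rw [div_le_iff₀ hβ0]
      nlinarith
    linarith
  have hαδ : δ ≤ α * (r - ε) / β := by
    rw [le_div_iff₀ hβ0]
    have h1 : β * δ ≤ α * (r - ε) := (div_le_iff₀ hre0).1 hα
    nlinarith
  refine ⟨aux_main (p / (p - 1) - τ) (r - ε) β α δ hq1 hre1 hreq hβ1 hα0 hδ0 hinv hαδ,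
    aux_bp (p / (p - 1)) τ hτ0, ?_, ?_⟩
  · obtain ⟨C, hC0, hC⟩ := aux_upper r ε δ hre1 hε0 hδ0
    exact ⟨C, hC0, fun σ hσ t ht => hC σ hσ t ht⟩
  · exact ⟨1, one_pos, fun σ hσ0 hσ1 t ht =>
      aux_lower r ε δ s (by linarith) (by linarith) hδ0.le σ hσ0 hσ1 t ht⟩
end

section
/- Let p>1 and let ξ̃, η, φ be Young functions such that η^{−1}(t)φ^{−1}(t) ≤ C₀·ξ̃^{−1}(t) for all t ≥ t₀ ≥ e, and assume η ∈ B_{p'}. Then there exist constants C>0 and t₁ ≥ t₀ such that ξ̃(t) ≤ C·φ_p(t) for every t ≥ t₁, where φ_p(t)=φ(t^{1/p}). In particular, ξ̃^{−1}(t) ≥ c·φ_p^{−1}(t) for large t. -/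
open MeasureTheory Real Set Filter

section Aux

open Real Set MeasureTheory Filter Topology

private lemma young_nonneg {ψ : ℝ → ℝ} (h : IsYoung ψ) {s : ℝ} (hs : 0 ≤ s) : 0 ≤ ψ s := by
  rcases eq_or_lt_of_le hs with h0 | h0
  · simp [← h0, h.zero]
  · have := h.strictMonoOn (Set.mem_Ici.mpr le_rfl) (Set.mem_Ici.mpr hs) h0
    linarith [h.zero]

private lemma young_one_pos {ψ : ℝ → ℝ} (h : IsYoung ψ) : 0 < ψ 1 := by
  have := h.strictMonoOn (Set.mem_Ici.mpr le_rfl) (Set.mem_Ici.mpr zero_le_one) one_pos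
  linarith [h.zero]

private lemma young_mono {ψ : ℝ → ℝ} (h : IsYoung ψ) : MonotoneOn ψ (Set.Ici 0) :=
  h.strictMonoOn.monotoneOn

private lemma yinv_set_nonempty {ψ : ℝ → ℝ} (h : IsYoung ψ) (u : ℝ) :
    {s : ℝ | 0 ≤ s ∧ u ≤ ψ s}.Nonempty := by
  obtain ⟨s, hs1, hs2⟩ :=
    ((h.tendsto_atTop.eventually_ge_atTop u).and (eventually_ge_atTop 0)).exists
  exact ⟨s, hs2, hs1⟩

private lemma yinv_bddBelow (ψ : ℝ → ℝ) (u : ℝ) : BddBelow {s : ℝ | 0 ≤ s ∧ u ≤ ψ s} :=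
  ⟨0, fun _ hx => hx.1⟩

private lemma yinv_nonneg (ψ : ℝ → ℝ) (u : ℝ) : 0 ≤ yinv ψ u :=
  Real.sInf_nonneg fun _ hx => hx.1

private lemma yinv_le {ψ : ℝ → ℝ} {u r : ℝ} (h0 : 0 ≤ r) (hr : u ≤ ψ r) : yinv ψ u ≤ r :=
  csInf_le (yinv_bddBelow ψ u) ⟨h0, hr⟩

private lemma le_yinv {ψ : ℝ → ℝ} (h : IsYoung ψ) {u r : ℝ}
    (H : ∀ s, 0 ≤ s → u ≤ ψ s → r ≤ s) : r ≤ yinv ψ u :=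
  le_csInf (yinv_set_nonempty h u) fun s hs => H s hs.1 hs.2

private lemma lt_of_yinv_lt {ψ : ℝ → ℝ} (h : IsYoung ψ) {u r : ℝ} (hlt : yinv ψ u < r) :
    ∃ s, 0 ≤ s ∧ u ≤ ψ s ∧ s < r := by
  obtain ⟨s, hs, hsr⟩ := exists_lt_of_csInf_lt (yinv_set_nonempty h u) hlt
  exact ⟨s, hs.1, hs.2, hsr⟩

private lemma young_ge_linear {ψ : ℝ → ℝ} (h : IsYoung ψ) {s : ℝ} (hs : 1 ≤ s) :
    s * ψ 1 ≤ ψ s := by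
  have hs0 : (0:ℝ) < s := lt_of_lt_of_le one_pos hs
  have hb0 : (0:ℝ) ≤ 1/s := by positivity
  have ha0 : (0:ℝ) ≤ 1 - 1/s := by
    have : 1/s ≤ 1 := by rw [div_le_one hs0]; exact hs
    linarith
  have hcv := h.convexOn.2 (Set.mem_Ici.mpr (le_refl (0:ℝ))) (Set.mem_Ici.mpr hs0.le)
    ha0 hb0 (by ring)
  have hcv2 : ψ 1 ≤ 1/s * ψ s := by
    have harg : (1 - 1/s) • (0:ℝ) + (1/s) • s = 1 := by
      simp only [smul_eq_mul]; field_simp; ring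
    rw [harg] at hcv
    simpa [smul_eq_mul, h.zero] using hcv
  have := mul_le_mul_of_nonneg_left hcv2 hs0.le
  calc s * ψ 1 ≤ s * (1/s * ψ s) := this
    _ = ψ s := by field_simp

private lemma yinv_comp_rpow {φ : ℝ → ℝ} (hφ : IsYoung φ) {p : ℝ} (hp : 0 < p) (u : ℝ) :
    yinv (fun l => φ (l ^ (1/p))) u = (yinv φ u) ^ p := by
  have hA0 : 0 ≤ yinv φ u := yinv_nonneg φ u
  set Sp : Set ℝ := {l : ℝ | 0 ≤ l ∧ u ≤ φ (l ^ (1/p))} with hSp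
  have hSpne : Sp.Nonempty := by
    obtain ⟨s, hs0, hsu⟩ := yinv_set_nonempty hφ u
    refine ⟨s ^ p, Real.rpow_nonneg hs0 p, ?_⟩
    rw [one_div, Real.rpow_rpow_inv hs0 hp.ne']
    exact hsu
  have hSp0 : 0 ≤ sInf Sp := Real.sInf_nonneg fun _ hx => hx.1
  have heq : yinv (fun l => φ (l ^ (1/p))) u = sInf Sp := rfl
  rw [heq]
  apply le_antisymm
  · by_contra hcon
    push_neg at hcon
    have h1 : yinv φ u < (sInf Sp) ^ (1/p) := by
      by_contra h2
      push_neg at h2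
      have h3 : sInf Sp ≤ (yinv φ u) ^ p := by
        calc sInf Sp = ((sInf Sp) ^ (1/p)) ^ p := by
              rw [one_div, Real.rpow_inv_rpow hSp0 hp.ne']
          _ ≤ (yinv φ u) ^ p :=
              Real.rpow_le_rpow (Real.rpow_nonneg hSp0 _) h2 hp.le
      linarith
    obtain ⟨s, hs0, hsu, hslt⟩ := lt_of_yinv_lt hφ h1
    have hmem : s ^ p ∈ Sp := by
      refine ⟨Real.rpow_nonneg hs0 p, ?_⟩
      rw [one_div, Real.rpow_rpow_inv hs0 hp.ne']
      exact hsu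
    have h3 : sInf Sp ≤ s ^ p := csInf_le ⟨0, fun _ hx => hx.1⟩ hmem
    have h4 : s ^ p < sInf Sp := by
      calc s ^ p < ((sInf Sp) ^ (1/p)) ^ p := Real.rpow_lt_rpow hs0 hslt hp
        _ = sInf Sp := by rw [one_div, Real.rpow_inv_rpow hSp0 hp.ne']
    linarith
  · apply le_csInf hSpne
    rintro l ⟨hl0, hlu⟩
    have h1 : yinv φ u ≤ l ^ (1/p) := yinv_le (Real.rpow_nonneg hl0 _) hlu
    calc (yinv φ u) ^ p ≤ (l ^ (1/p)) ^ p := Real.rpow_le_rpow hA0 h1 hp.le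
      _ = l := by rw [one_div, Real.rpow_inv_rpow hl0 hp.ne']

private lemma memBp_pointwise {η : ℝ → ℝ} (hη : IsYoung η) {q : ℝ} (hq : 0 < q)
    (hB : MemBp η q) {δ : ℝ} (hδ : 0 < δ) :
    ∃ s₂ : ℝ, 1 ≤ s₂ ∧ ∀ s, s₂ ≤ s → η s ≤ δ * s ^ q := by
  obtain ⟨c, hc, hint⟩ := hB
  set f : ℝ → ℝ := fun t => η t / t ^ (q + 1) with hf
  set T := ∫ x in Set.Ioi c, f x with hT
  have hU : (⋃ n : ℕ, Set.Ioc c (n : ℝ)) = Set.Ioi c := by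
    ext x
    simp only [Set.mem_iUnion, Set.mem_Ioc, Set.mem_Ioi]
    constructor
    · rintro ⟨n, h1, _⟩; exact h1
    · intro hx; obtain ⟨n, hn⟩ := exists_nat_ge x; exact ⟨n, hx, hn⟩
  have htend : Tendsto (fun n : ℕ => ∫ x in Set.Ioc c (n:ℝ), f x) atTop (𝓝 T) := by
    have := MeasureTheory.tendsto_setIntegral_of_monotone (f := f) (μ := volume)
      (s := fun n : ℕ => Set.Ioc c (n:ℝ)) (fun n => measurableSet_Ioc)
      (fun n m hnm => Set.Ioc_subset_Ioc_right (by exact_mod_cast hnm))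
      (by rw [hU]; exact hint)
    rwa [hU] at this
  set ε := δ / 2 ^ (q + 1) with hε
  have h2q : (0:ℝ) < 2 ^ (q + 1) := Real.rpow_pos_of_pos two_pos _
  have hεpos : 0 < ε := by positivity
  have hev : ∀ᶠ n : ℕ in atTop, T - ε < ∫ x in Set.Ioc c (n:ℝ), f x :=
    htend.eventually (eventually_gt_nhds (by linarith))
  obtain ⟨N, hNe, hNc'⟩ := (hev.and (eventually_ge_atTop ⌈c⌉₊)).exists
  have hcN : c ≤ (N : ℝ) := Nat.ceil_le.mp hNc'
  have hint2 : IntegrableOn f (Set.Ioi (N:ℝ)) volume :=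
    hint.mono_set (Set.Ioi_subset_Ioi hcN)
  have hint1 : IntegrableOn f (Set.Ioc c (N:ℝ)) volume :=
    hint.mono_set Set.Ioc_subset_Ioi_self
  have hsplit : T = (∫ x in Set.Ioc c (N:ℝ), f x) + ∫ x in Set.Ioi (N:ℝ), f x := by
    rw [← MeasureTheory.setIntegral_union (Set.Ioc_disjoint_Ioi le_rfl) measurableSet_Ioi
      hint1 hint2, Set.Ioc_union_Ioi_eq_Ioi hcN]
  have htail : ∫ x in Set.Ioi (N:ℝ), f x ≤ ε := by linarith
  have hf0 : 0 ≤ᵐ[volume.restrict (Set.Ioi (N:ℝ))] f := by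
    filter_upwards [MeasureTheory.ae_restrict_mem measurableSet_Ioi] with x hx
    have hx0 : 0 < x := lt_of_le_of_lt (hc.le.trans hcN) hx
    exact div_nonneg (young_nonneg hη hx0.le) (Real.rpow_pos_of_pos hx0 _).le
  refine ⟨max (N:ℝ) 1, le_max_right _ _, ?_⟩
  intro s hs
  have hs1 : (1:ℝ) ≤ s := le_trans (le_max_right _ _) hs
  have hsN : (N:ℝ) ≤ s := le_trans (le_max_left _ _) hs
  have hs0 : (0:ℝ) < s := lt_of_lt_of_le one_pos hs1
  have h2s0 : (0:ℝ) < 2 * s := by linarith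
  have hsub : Set.Ioc s (2*s) ⊆ Set.Ioi (N:ℝ) := fun x hx => lt_of_le_of_lt hsN hx.1
  have hfi : IntegrableOn f (Set.Ioc s (2*s)) volume := hint2.mono_set hsub
  have hconstint : IntegrableOn (fun _ : ℝ => η s / (2*s) ^ (q+1)) (Set.Ioc s (2*s)) volume :=
    integrableOn_const measure_Ioc_lt_top.ne
  have hlow : η s / (2*s) ^ (q+1) * s ≤ ∫ x in Set.Ioc s (2*s), f x := by
    have hconst : ∫ _x in Set.Ioc s (2*s), (η s / (2*s) ^ (q+1)) = η s / (2*s) ^ (q+1) * s := by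
      rw [MeasureTheory.setIntegral_const, Real.volume_real_Ioc_of_le (by linarith), smul_eq_mul]
      ring_nf
    rw [← hconst]
    apply MeasureTheory.setIntegral_mono_on hconstint hfi measurableSet_Ioc
    intro x hx
    have hx0 : 0 < x := lt_trans hs0 hx.1
    exact div_le_div₀ (young_nonneg hη hx0.le)
      (young_mono hη (Set.mem_Ici.mpr hs0.le) (Set.mem_Ici.mpr hx0.le) hx.1.le)
      (Real.rpow_pos_of_pos hx0 _)
      (Real.rpow_le_rpow hx0.le hx.2 (by linarith))
  have hup : ∫ x in Set.Ioc s (2*s), f x ≤ ∫ x in Set.Ioi (N:ℝ), f x :=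
    MeasureTheory.setIntegral_mono_set hint2 hf0 (HasSubset.Subset.eventuallyLE hsub)
  have hkey : η s / (2*s) ^ (q+1) * s ≤ ε := le_trans hlow (le_trans hup htail)
  have h2spos : (0:ℝ) < (2*s) ^ (q+1) := Real.rpow_pos_of_pos h2s0 _
  have h1 : η s * s ≤ ε * (2*s) ^ (q+1) := by
    have := mul_le_mul_of_nonneg_right hkey h2spos.le
    calc η s * s = η s / (2*s)^(q+1) * s * (2*s)^(q+1) := by field_simp
      _ ≤ ε * (2*s)^(q+1) := this
  have h2 : (2*s) ^ (q+1) = 2 ^ (q+1) * (s ^ q * s) := by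
    rw [Real.mul_rpow (by norm_num) hs0.le, Real.rpow_add hs0, Real.rpow_one]
  rw [h2, hε] at h1
  have h3 : η s * s ≤ δ * s ^ q * s := by
    have heq : δ / 2 ^ (q+1) * (2 ^ (q+1) * (s ^ q * s)) = δ * s ^ q * s := by
      field_simp
    linarith [heq ▸ h1]
  exact le_of_mul_le_mul_right h3 hs0

end Aux

/-- if `η⁻¹ φ⁻¹ ≲ ξ̃⁻¹` for large arguments and `η ∈ B_{p'}`, then
`ξ̃(t) ≲ φ_p(t) = φ(t^{1/p})` for large `t`; in particular `ξ̃⁻¹(t) ≳ φ_p⁻¹(t)`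
for large `t`. -/
theorem xitilde_le_phi_p
    (p : ℝ) (hp : 1 < p)
    (ξt η φ : ℝ → ℝ) (hξt : IsYoung ξt) (hη : IsYoung η) (hφ : IsYoung φ)
    (C₀ t₀ : ℝ) (hC₀ : 0 < C₀) (ht₀ : Real.exp 1 ≤ t₀)
    (hinv : ∀ t : ℝ, t₀ ≤ t → yinv η t * yinv φ t ≤ C₀ * yinv ξt t)
    (hηB : MemBp η (p / (p - 1))) :
    (∃ C, 0 < C ∧ ∃ t₁, t₀ ≤ t₁ ∧ ∀ t : ℝ, t₁ ≤ t → ξt t ≤ C * φ (t ^ (1 / p))) ∧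
    (∃ c, 0 < c ∧ ∃ t₂ : ℝ, ∀ t : ℝ, t₂ ≤ t →
      c * yinv (fun l => φ (l ^ (1 / p))) t ≤ yinv ξt t) := by
  have hp0 : (0:ℝ) < p := lt_trans one_pos hp
  have hp1 : (0:ℝ) < p - 1 := by linarith
  set q : ℝ := p / (p - 1) with hqdef
  have hq0 : (0:ℝ) < q := by positivity
  have hqp : (1/q) * p = p - 1 := by
    rw [hqdef, one_div_div]
    field_simp
  set a : ℝ := ξt 1 with hadef
  have ha : 0 < a := young_one_pos hξt
  set D : ℝ := a ^ (p-1) / (2 ^ p * C₀ ^ p) with hDdef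
  have hD : 0 < D := by
    apply div_pos (Real.rpow_pos_of_pos ha _)
    exact mul_pos (Real.rpow_pos_of_pos two_pos _) (Real.rpow_pos_of_pos hC₀ _)
  set δ : ℝ := min 1 (D ^ (p-1)⁻¹) with hδdef
  have hδ : 0 < δ := lt_min one_pos (Real.rpow_pos_of_pos hD _)
  have hδ1 : δ ≤ 1 := min_le_left _ _
  have hδD : δ ^ (p-1) ≤ D := by
    calc δ ^ (p-1) ≤ (D ^ (p-1)⁻¹) ^ (p-1) :=
          Real.rpow_le_rpow hδ.le (min_le_right _ _) hp1.le
      _ = D := Real.rpow_inv_rpow hD.le hp1.ne'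
  obtain ⟨s₂, hs₂1, hs₂⟩ := memBp_pointwise hη hq0 hηB hδ
  set u₁ : ℝ := max (max t₀ (a+1)) (max (δ * s₂ ^ q + 1) 1) with hu₁def
  have key : ∀ u : ℝ, u₁ ≤ u → (yinv φ u) ^ p ≤ (1/2 : ℝ) ^ p * yinv ξt u := by
    intro u hu
    have hu_t₀ : t₀ ≤ u := le_trans (le_trans (le_max_left _ _) (le_max_left _ _)) hu
    have hu_a : a + 1 ≤ u := le_trans (le_trans (le_max_right _ _) (le_max_left _ _)) hu
    have hu_s : δ * s₂ ^ q + 1 ≤ u :=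
      le_trans (le_trans (le_max_left _ _) (le_max_right _ _)) hu
    have hu_1 : (1:ℝ) ≤ u := le_trans (le_trans (le_max_right _ _) (le_max_right _ _)) hu
    have hu0 : (0:ℝ) < u := lt_of_lt_of_le one_pos hu_1
    set Y : ℝ := yinv φ u with hYdef
    set Z : ℝ := yinv ξt u with hZdef
    have hY0 : 0 ≤ Y := yinv_nonneg φ u
    have hZ0 : 0 ≤ Z := yinv_nonneg ξt u
    have h3 : yinv η u * Y ≤ C₀ * Z := hinv u hu_t₀
    have huδ0 : (0:ℝ) < u / δ := div_pos hu0 hδ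
    have h1 : (u/δ) ^ (1/q) ≤ yinv η u := by
      apply le_yinv hη
      intro s hs0 hsu
      by_contra hcon
      push_neg at hcon
      rcases le_or_gt s₂ s with hcase | hcase
      · have h4 : η s ≤ δ * s ^ q := hs₂ s hcase
        have h5 : s ^ q < ((u/δ) ^ (1/q)) ^ q := Real.rpow_lt_rpow hs0 hcon hq0
        rw [one_div, Real.rpow_inv_rpow huδ0.le hq0.ne'] at h5
        have h6 : δ * s ^ q < δ * (u/δ) := mul_lt_mul_of_pos_left h5 hδ
        have h7 : δ * (u/δ) = u := by field_simp
        rw [h7] at h6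
        linarith
      · have h4 : η s ≤ η s₂ := young_mono hη (Set.mem_Ici.mpr hs0)
          (Set.mem_Ici.mpr (le_trans zero_le_one hs₂1)) hcase.le
        have h5 : η s₂ ≤ δ * s₂ ^ q := hs₂ s₂ le_rfl
        linarith
    have h2 : Z ≤ u / a := by
      apply yinv_le (by positivity)
      have hua : (1:ℝ) ≤ u / a := by
        rw [le_div_iff₀ ha]
        linarith
      have := young_ge_linear hξt hua
      rw [← hadef] at this
      calc u = u / a * a := by field_simp
        _ ≤ ξt (u / a) := this
    rcases eq_or_lt_of_le hZ0 with hZeq | hZpos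
    · have hE : (0:ℝ) < (u/δ) ^ (1/q) := Real.rpow_pos_of_pos huδ0 _
      have h4 : (u/δ) ^ (1/q) * Y ≤ C₀ * Z :=
        le_trans (mul_le_mul_of_nonneg_right h1 hY0) h3
      rw [← hZeq, mul_zero] at h4
      have hY : Y = 0 := by
        have hY' : Y ≤ 0 := by
          by_contra hcon
          push_neg at hcon
          nlinarith [mul_pos hE hcon]
        exact le_antisymm hY' hY0
      rw [hY, Real.zero_rpow hp0.ne', ← hZeq, mul_zero]
    · have hE : (0:ℝ) < (u/δ) ^ (1/q) := Real.rpow_pos_of_pos huδ0 _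
      have h4 : (u/δ) ^ (1/q) * Y ≤ C₀ * Z :=
        le_trans (mul_le_mul_of_nonneg_right h1 hY0) h3
      have h5 : Y ≤ C₀ * Z / (u/δ) ^ (1/q) := by
        rw [le_div_iff₀ hE]
        linarith [h4, mul_comm Y ((u/δ) ^ (1/q))]
      have h6 : Y ^ p ≤ (C₀ * Z / (u/δ) ^ (1/q)) ^ p := Real.rpow_le_rpow hY0 h5 hp0.le
      have h8 : Z ^ p = Z ^ (p-1) * Z := by
        rw [← Real.rpow_add_one hZpos.ne' (p-1)]
        congr 1
        ring
      have h9 : Z ^ (p-1) ≤ (u/a) ^ (p-1) := Real.rpow_le_rpow hZ0 h2 hp1.le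
      have hEp : ((u/δ) ^ (1/q)) ^ p = (u/δ) ^ (p-1) := by
        rw [← Real.rpow_mul huδ0.le, hqp]
      have hUδpos : (0:ℝ) < (u/δ) ^ (p-1) := Real.rpow_pos_of_pos huδ0 _
      have hq1 : (u/a) ^ (p-1) = (δ/a) ^ (p-1) * (u/δ) ^ (p-1) := by
        rw [← Real.mul_rpow (by positivity) (by positivity)]
        congr 1
        field_simp
      have hcoef : C₀ ^ p * (δ/a) ^ (p-1) ≤ (1/2 : ℝ) ^ p := by
        have hap : (0:ℝ) < a ^ (p-1) := Real.rpow_pos_of_pos ha _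
        have h2p : (0:ℝ) < (2:ℝ) ^ p := Real.rpow_pos_of_pos two_pos _
        have hCp : (0:ℝ) < C₀ ^ p := Real.rpow_pos_of_pos hC₀ _
        rw [Real.div_rpow hδ.le ha.le]
        have hstep : C₀ ^ p * (δ ^ (p-1) / a ^ (p-1)) ≤ C₀ ^ p * (D / a ^ (p-1)) := by
          gcongr
        calc C₀ ^ p * (δ ^ (p-1) / a ^ (p-1)) ≤ C₀ ^ p * (D / a ^ (p-1)) := hstep
          _ = 1 / 2 ^ p := by rw [hDdef]; field_simp
          _ = (1/2 : ℝ) ^ p := by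
              rw [Real.div_rpow zero_le_one (by norm_num), Real.one_rpow]
    -- combine
      calc Y ^ p ≤ (C₀ * Z / (u/δ) ^ (1/q)) ^ p := h6
        _ = C₀ ^ p * Z ^ p / ((u/δ) ^ (1/q)) ^ p := by
            rw [Real.div_rpow (mul_nonneg hC₀.le hZ0) hE.le, Real.mul_rpow hC₀.le hZ0]
        _ = C₀ ^ p * Z ^ p / (u/δ) ^ (p-1) := by rw [hEp]
        _ = C₀ ^ p * (Z ^ (p-1) * Z) / (u/δ) ^ (p-1) := by rw [h8]
        _ ≤ C₀ ^ p * ((u/a) ^ (p-1) * Z) / (u/δ) ^ (p-1) := by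
            gcongr
        _ = C₀ ^ p * (δ/a) ^ (p-1) * Z := by
            rw [hq1]
            field_simp
        _ ≤ (1/2 : ℝ) ^ p * Z := mul_le_mul_of_nonneg_right hcoef hZ0
  constructor
  · obtain ⟨t₁', ht₁'⟩ := eventually_atTop.mp (hξt.tendsto_atTop.eventually_ge_atTop u₁)
    refine ⟨1, one_pos, max t₀ t₁', le_max_left _ _, ?_⟩
    intro t ht
    have htt₀ : t₀ ≤ t := le_trans (le_max_left _ _) ht
    have ht0 : (0:ℝ) < t := lt_of_lt_of_le (Real.exp_pos 1) (le_trans ht₀ htt₀)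
    set u : ℝ := ξt t with hudef
    have hu : u₁ ≤ u := ht₁' t (le_trans (le_max_right _ _) ht)
    have hZt : yinv ξt u ≤ t := yinv_le ht0.le le_rfl
    have hkey := key u hu
    have htp : (0:ℝ) < t ^ (1/p) := Real.rpow_pos_of_pos ht0 _
    have hW : ((1/2 : ℝ) * t ^ (1/p)) ^ p = (1/2 : ℝ) ^ p * t := by
      rw [Real.mul_rpow (by norm_num) htp.le, one_div p, Real.rpow_inv_rpow ht0.le hp0.ne']
    have hYW : yinv φ u ≤ (1/2 : ℝ) * t ^ (1/p) := by
      by_contra hcon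
      push_neg at hcon
      have hlt : ((1/2 : ℝ) * t ^ (1/p)) ^ p < (yinv φ u) ^ p :=
        Real.rpow_lt_rpow (by positivity) hcon hp0
      rw [hW] at hlt
      have hch : (yinv φ u) ^ p ≤ (1/2 : ℝ) ^ p * t := by
        calc (yinv φ u) ^ p ≤ (1/2 : ℝ) ^ p * yinv ξt u := hkey
          _ ≤ (1/2 : ℝ) ^ p * t :=
            mul_le_mul_of_nonneg_left hZt (Real.rpow_nonneg (by norm_num) _)
      linarith
    have hYlt : yinv φ u < t ^ (1/p) := lt_of_le_of_lt hYW (by linarith)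
    obtain ⟨s, hs0, hsu, hslt⟩ := lt_of_yinv_lt hφ hYlt
    have : ξt t ≤ φ (t ^ (1/p)) := by
      calc ξt t = u := rfl
        _ ≤ φ s := hsu
        _ ≤ φ (t ^ (1/p)) :=
          young_mono hφ (Set.mem_Ici.mpr hs0) (Set.mem_Ici.mpr htp.le) hslt.le
    linarith [this]
  · refine ⟨1, one_pos, u₁, ?_⟩
    intro u hu
    rw [yinv_comp_rpow hφ hp0 u, one_mul]
    have hkey := key u hu
    have hZ0 : 0 ≤ yinv ξt u := yinv_nonneg ξt u
    have hhalf : (1/2 : ℝ) ^ p ≤ 1 := Real.rpow_le_one (by norm_num) (by norm_num) hp0.le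
    calc (yinv φ u) ^ p ≤ (1/2 : ℝ) ^ p * yinv ξt u := hkey
      _ ≤ 1 * yinv ξt u := mul_le_mul_of_nonneg_right hhalf hZ0
      _ = yinv ξt u := one_mul _
end
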